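/- In a Heinlein wall W of any size r ≥ 1, there do not exist two edge-disjoint (a*–b*, c*–d*) linkages, where an (a*–b*, c*–d*) linkage is the vertex-disjoint union of an a*–b* path and a c*–d* path. -/

import Mathlib

/-- Vertices of a Heinlein wall of size `r`: path vertices `u j i` (path `j`,
position `i`, both 0-based), bottleneck vertices `z t` (`t = 0, …, r`), and the
terminals `a`, `b`.  We write `c = z 0` and `d = z r`. -/
inductive HWVert (r : ℕ) where
  | u : Fin r → Fin (2 * r) → HWVert r
  | z : Fin (r + 1) → HWVert r
  | a : HWVert r
  | b : HWVert r
deriving DecidableEq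

/-- The defining relation of the Heinlein wall (paper 1-based indices translated
to 0-based ones): `u j i — u j (i+1)`; `z t — u j i` for `i` even iff `t = j`
and for `i` odd iff `t = j + 1`; `z t — z (t+1)`; `a — u j 0`; `b — u j (2r-1)`. -/
def HWRel (r : ℕ) : HWVert r → HWVert r → Prop := fun x y =>
  match x, y with
  | .u j i, .u j' i' => j = j' ∧ i'.val = i.val + 1
  | .z t, .u j i => (i.val % 2 = 0 ∧ t.val = j.val) ∨ (i.val % 2 = 1 ∧ t.val = j.val + 1)
  | .z t, .z t' => t'.val = t.val + 1
  | .a, .u _ i => i.val = 0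
  | .b, .u _ i => i.val = 2 * r - 1
  | _, _ => False

/-- The Heinlein wall of size `r`. -/
def HW (r : ℕ) : SimpleGraph (HWVert r) := SimpleGraph.fromRel (HWRel r)

/-- An (`a*`–`b*`, `c*`–`d*`) linkage in the Heinlein wall of size `r`:
a vertex-disjoint union of an `a*`–`b*` path and a `c*`–`d*` path
(recall `c* = z 0` and `d* = z r`). -/
structure HWLinkage (r : ℕ) where
  p : (HW r).Walk .a .b
  q : (HW r).Walk (.z 0) (.z (Fin.last r))
  hp : p.IsPath
  hq : q.IsPath
  disj : ∀ x, x ∈ p.support → x ∉ q.support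


/-! Give `u j i` and `z j` level `j`. The `c*–d*` path `q` of a linkage visits every bottleneck
vertex `z t`: to leave the vertices of level `< t` it must use an edge ending at `z t`, since the
other exits run through `a*` or `b*`, which lie on the `a*–b*` path `p`. Hence `p` avoids all
bottleneck vertices, so after its first step into some row `j` it is forced along the whole row.
Cutting between the even vertices of row `j` (adjacent to `z j`) and the odd ones (adjacent to
`z (j+1)`) shows that `q` uses either the bottleneck edge `z j — z (j+1)` or an edge of row `j`.
In a linkage whose `p` runs along row `j` the second option is excluded, so its `q` uses
`z j — z (j+1)`; any other linkage shares that edge or an edge of row `j` with it. -/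

open SimpleGraph

theorem SimpleGraph.Walk.exists_boundary_edge {V : Type*} {G : SimpleGraph V} {u v : V}
    (w : G.Walk u v) {S : Set V} (hu : u ∈ S) (hv : v ∉ S) :
    ∃ x ∈ S, ∃ y ∉ S, s(x, y) ∈ w.edges := by
  obtain ⟨d, hd, hx, hy⟩ := w.exists_boundary_dart S hu hv
  exact ⟨d.fst, hx, d.snd, hy, List.mem_map_of_mem hd⟩

theorem HW.adj_u_u_iff {r : ℕ} {j j' : Fin r} {i i' : Fin (2 * r)} :
    (HW r).Adj (.u j i) (.u j' i') ↔ j = j' ∧ (i'.val = i.val + 1 ∨ i.val = i'.val + 1) := by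
  simp only [HW, fromRel_adj, ne_eq, HWVert.u.injEq, HWRel, Fin.ext_iff]
  omega

theorem HW.adj_a_iff {r : ℕ} {y : HWVert r} :
    (HW r).Adj .a y ↔ ∃ j i, i.val = 0 ∧ y = .u j i := by
  rcases y with ⟨j, i⟩ | t | _ | _ <;> simp [HW, HWRel]

namespace HWLinkage

variable {r : ℕ} (L : HWLinkage r)

theorem a_notMem_q : .a ∉ L.q.support := L.disj _ L.p.start_mem_support

theorem b_notMem_q : .b ∉ L.q.support := L.disj _ L.p.end_mem_support

theorem z_mem_q (t : Fin (r + 1)) : .z t ∈ L.q.support := by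
  obtain ⟨t, ht⟩ := t
  cases t with
  | zero => exact L.q.start_mem_support
  | succ s =>
    let S : Set (HWVert r) := {x | match x with
      | .u j _ => j.val ≤ s
      | .z t' => t'.val ≤ s
      | _ => False}
    obtain ⟨x, hx, y, hy, hxy⟩ :=
      L.q.exists_boundary_edge (S := S) (by simp [S]) (by simp [S]; omega)
    have hyq := L.q.snd_mem_support_of_mem_edges hxy
    have hadj := L.q.adj_of_mem_edges hxy
    have hya : y ≠ .a := by rintro rfl; exact L.a_notMem_q hyq
    have hyb : y ≠ .b := by rintro rfl; exact L.b_notMem_q hyq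
    obtain rfl : y = .z ⟨s + 1, ht⟩ := by
      rcases x with ⟨j, i⟩ | t' | _ | _ <;> rcases y with ⟨j', i'⟩ | t'' | _ | _ <;>
        simp [S, HW, HWRel, Fin.ext_iff] at hx hy hadj hya hyb ⊢ <;> omega
    exact hyq

theorem z_notMem_p (t : Fin (r + 1)) : .z t ∉ L.p.support :=
  fun h => L.disj _ h (L.z_mem_q t)

theorem exists_row_edges_mem_p :
    ∃ j : Fin r, ∀ i i' : Fin (2 * r), i'.val = i.val + 1 →
      s(.u j i, .u j i') ∈ L.p.edges := by
  obtain ⟨y, hay, w, hw⟩ := L.p.exists_eq_cons_of_ne (by simp : (HWVert.a : HWVert r) ≠ .b)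
  have hpath := L.hp
  rw [hw, Walk.cons_isPath_iff] at hpath
  obtain ⟨j, i₀, hi₀, rfl⟩ := HW.adj_a_iff.1 hay
  refine ⟨j, fun k k' hk => ?_⟩
  have hz : ∀ t, .z t ∉ w.support := fun t h =>
    L.z_notMem_p t (by rw [hw, Walk.support_cons]; exact List.mem_cons_of_mem _ h)
  -- `w` avoids `a*` and every `z t`, so it can leave this set only along the next row edge.
  let S : Set (HWVert r) := {x | match x with
    | .u j' i => j' = j ∧ i.val ≤ k.val
    | .b => False
    | _ => True}
  obtain ⟨x, hx, y, hy, hxy⟩ :=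
    w.exists_boundary_edge (S := S) (by simp [S]; omega) (by simp [S])
  have hadj := w.adj_of_mem_edges hxy
  have hxw := w.fst_mem_support_of_mem_edges hxy
  obtain ⟨rfl, rfl⟩ : x = .u j k ∧ y = .u j k' := by
    rcases x with ⟨j', i⟩ | t' | _ | _
    · rcases y with ⟨j'', i'⟩ | t'' | _ | _ <;>
        simp [S, HW, HWRel, Fin.ext_iff] at hx hy hadj ⊢ <;> omega
    · exact absurd hxw (hz t')
    · exact absurd hxw hpath.2
    · exact hx.elim
  rw [hw, Walk.edges_cons]
  exact List.mem_cons_of_mem _ hxy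

theorem bottleneck_edge_mem_q_or_row_edge_mem_q (j : Fin r) :
    s(.z j.castSucc, .z j.succ) ∈ L.q.edges ∨
      ∃ i i' : Fin (2 * r), i'.val = i.val + 1 ∧ s(.u j i, .u j i') ∈ L.q.edges := by
  let S : Set (HWVert r) := {x | match x with
    | .z t => t.val ≤ j.val
    | .u j' i => j'.val < j.val ∨ (j' = j ∧ i.val % 2 = 0)
    | _ => False}
  obtain ⟨x, hx, y, hy, hxy⟩ := L.q.exists_boundary_edge (S := S) (by simp [S]) (by simp [S])
  have hyq := L.q.snd_mem_support_of_mem_edges hxy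
  have hadj := L.q.adj_of_mem_edges hxy
  have hya : y ≠ .a := by rintro rfl; exact L.a_notMem_q hyq
  have hyb : y ≠ .b := by rintro rfl; exact L.b_notMem_q hyq
  rcases x with ⟨j', i⟩ | t' | _ | _ <;> rcases y with ⟨j'', i'⟩ | t'' | _ | _
  case u.u =>
    obtain ⟨rfl, hi⟩ := HW.adj_u_u_iff.1 hadj
    obtain rfl : j' = j := by simp [S, Fin.ext_iff, - Fin.val_fin_lt] at hx hy; omega
    rcases hi with hi | hi
    · exact .inr ⟨i, i', hi, hxy⟩
    · exact .inr ⟨i', i, hi, Sym2.eq_swap ▸ hxy⟩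
  case z.z =>
    obtain ⟨rfl, rfl⟩ : t' = j.castSucc ∧ t'' = j.succ := by
      simp [S, HW, HWRel, Fin.ext_iff, Fin.val_castSucc, Fin.val_succ] at hx hy hadj ⊢
      omega
    exact .inl hxy
  all_goals
    simp [S, HW, HWRel, Fin.ext_iff, - Fin.val_fin_le, - Fin.val_fin_lt] at hx hy hadj hya hyb
    <;> omega

end HWLinkage

theorem heinleinWall_no_two_edgeDisjoint_linkages_general (r : ℕ)
    (L₁ L₂ : HWLinkage r) :
    ∃ e : Sym2 (HWVert r),
      (e ∈ L₁.p.edges ∨ e ∈ L₁.q.edges) ∧ (e ∈ L₂.p.edges ∨ e ∈ L₂.q.edges) := by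
  obtain ⟨j, hrow⟩ := L₁.exists_row_edges_mem_p
  have hz₁ : s(.z j.castSucc, .z j.succ) ∈ L₁.q.edges := by
    refine (L₁.bottleneck_edge_mem_q_or_row_edge_mem_q j).resolve_right ?_
    rintro ⟨i, i', hi, hq⟩
    exact L₁.disj _ (L₁.p.fst_mem_support_of_mem_edges (hrow i i' hi))
      (L₁.q.fst_mem_support_of_mem_edges hq)
  rcases L₂.bottleneck_edge_mem_q_or_row_edge_mem_q j with hz₂ | ⟨i, i', hi, hq₂⟩
  · exact ⟨_, .inr hz₁, .inr hz₂⟩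
  · exact ⟨_, .inl (hrow i i' hi), .inr hq₂⟩

/-- In a Heinlein wall of size `r ≥ 1` there are no two edge-disjoint
(`a*`–`b*`, `c*`–`d*`) linkages: any two linkages share an edge. -/
theorem heinleinWall_no_two_edgeDisjoint_linkages (r : ℕ) (hr : 1 ≤ r)
    (L₁ L₂ : HWLinkage r) :
    ∃ e : Sym2 (HWVert r),
      (e ∈ L₁.p.edges ∨ e ∈ L₁.q.edges) ∧ (e ∈ L₂.p.edges ∨ e ∈ L₂.q.edges) :=
  heinleinWall_no_two_edgeDisjoint_linkages_general r L₁ L₂
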